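/- A Cu-semigroup S is weakly cancellative if and only if every basis B ⊆ S has the following property: for all x', x, y', y, z', z ∈ B with x' ≪ x, y' ≪ y, z' ≪ z and x + z ≪ y' + z', one has x' ≪ y. -/
import Mathlib


def WayBelow {S : Type*} [PartialOrder S] (x y : S) : Prop :=
  ∀ f : ℕ → S, Monotone f → ∀ z : S, IsLUB (Set.range f) z → y ≤ z → ∃ n, x ≤ f n

class CuSemigroup (S : Type*) [AddCommMonoid S] [PartialOrder S] : Prop where
  zero_le : ∀ x : S, 0 ≤ x
  add_le_add_left : ∀ x y : S, x ≤ y → ∀ z : S, z + x ≤ z + y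
  exists_sup : ∀ f : ℕ → S, Monotone f → ∃ z : S, IsLUB (Set.range f) z
  exists_wb_seq : ∀ x : S, ∃ f : ℕ → S, (∀ n, WayBelow (f n) (f (n + 1))) ∧ IsLUB (Set.range f) x
  wb_add : ∀ x' x y' y : S, WayBelow x' x → WayBelow y' y → WayBelow (x' + y') (x + y)
  sup_add : ∀ f g : ℕ → S, Monotone f → Monotone g → ∀ a b : S,
    IsLUB (Set.range f) a → IsLUB (Set.range g) b →
    IsLUB (Set.range fun n => f n + g n) (a + b)

def IsBasis {S : Type*} [PartialOrder S] (B : Set S) : Prop :=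
  ∀ x' x : S, WayBelow x' x → ∃ b ∈ B, WayBelow x' b ∧ WayBelow b x

def WeaklyCancellative (S : Type*) [AddCommMonoid S] [PartialOrder S] : Prop :=
  ∀ x y z : S, WayBelow (x + z) (y + z) → WayBelow x y

section Aux

variable {S : Type*} [AddCommMonoid S] [PartialOrder S]

/-- Way-below is monotone: x ≤ x' ≪ y' ≤ y implies x ≪ y. -/
lemma wb_mono {x x' y' y : S} (h1 : x ≤ x') (h2 : WayBelow x' y') (h3 : y' ≤ y) :
    WayBelow x y := by
  intro f hf z hz hyz
  obtain ⟨n, hn⟩ := h2 f hf z hz (le_trans h3 hyz)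
  exact ⟨n, le_trans h1 hn⟩

/-- Way-below implies ≤. -/
lemma wb_le {x y : S} (h : WayBelow x y) : x ≤ y := by
  obtain ⟨n, hn⟩ := h (fun _ => y) monotone_const y (by simp [Set.range_const]) le_rfl
  exact hn

variable [CuSemigroup S]

lemma add_le_add' {a b c d : S} (h1 : a ≤ b) (h2 : c ≤ d) : a + c ≤ b + d := by
  calc a + c ≤ a + d := CuSemigroup.add_le_add_left c d h2 a
    _ = d + a := add_comm a d
    _ ≤ d + b := CuSemigroup.add_le_add_left a b h1 d
    _ = b + d := add_comm d b

/-- The whole semigroup is a basis. -/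
lemma isBasis_univ : IsBasis (Set.univ : Set S) := by
  intro x' x hx'
  obtain ⟨f, hf, hlub⟩ := CuSemigroup.exists_wb_seq x
  have hmono : Monotone f := monotone_nat_of_le_succ fun n => wb_le (hf n)
  obtain ⟨m, hm⟩ := hx' f hmono x hlub le_rfl
  have hfx : ∀ n, f n ≤ x := fun n => hlub.1 (Set.mem_range_self n)
  exact ⟨f (m + 1), Set.mem_univ _, wb_mono hm (hf m) le_rfl,
    wb_mono le_rfl (hf (m + 1)) (hfx (m + 2))⟩

end Aux

theorem weaklyCancellative_iff_basis_property {S : Type*} [AddCommMonoid S] [PartialOrder S]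
    [CuSemigroup S] :
    WeaklyCancellative S ↔ ∀ B : Set S, IsBasis B →
      ∀ x' x y' y z' z : S, x' ∈ B → x ∈ B → y' ∈ B → y ∈ B → z' ∈ B → z ∈ B →
        WayBelow x' x → WayBelow y' y → WayBelow z' z → WayBelow (x + z) (y' + z') →
        WayBelow x' y := by
  constructor
  · -- Forward: weak cancellation gives the basis property.
    intro h B _ x' x y' y z' z _ _ _ _ _ _ hx' hy' hz' hxz
    have h1 : y' + z' ≤ y + z := add_le_add' (wb_le hy') (wb_le hz')
    have h2 : WayBelow (x + z) (y + z) := wb_mono le_rfl hxz h1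
    exact wb_mono (wb_le hx') (h x y z h2) le_rfl
  · -- Backward: apply the property to the basis B = univ.
    intro h x y z hxz
    obtain ⟨g, hg, hgy⟩ := CuSemigroup.exists_wb_seq y
    obtain ⟨k, hk, hkz⟩ := CuSemigroup.exists_wb_seq z
    have hgm : Monotone g := monotone_nat_of_le_succ fun n => wb_le (hg n)
    have hkm : Monotone k := monotone_nat_of_le_succ fun n => wb_le (hk n)
    have hgy' : ∀ n, g n ≤ y := fun n => hgy.1 (Set.mem_range_self n)
    have hkz' : ∀ n, k n ≤ z := fun n => hkz.1 (Set.mem_range_self n)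
    have hsum : IsLUB (Set.range fun n => g n + k n) (y + z) :=
      CuSemigroup.sup_add g k hgm hkm y z hgy hkz
    have hsmono : Monotone fun n => g n + k n :=
      fun a b hab => add_le_add' (hgm hab) (hkm hab)
    obtain ⟨n, hn⟩ := hxz (fun n => g n + k n) hsmono (y + z) hsum le_rfl
    -- x + k (n+2) ≪ g (n+1) + k (n+1)
    have key : WayBelow (x + k (n + 2)) (g (n + 1) + k (n + 1)) := by
      have h1 : x + k (n + 2) ≤ g n + k n :=
        le_trans (CuSemigroup.add_le_add_left _ _ (hkz' (n + 2)) x) hn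
      exact wb_mono h1 (CuSemigroup.wb_add _ _ _ _ (hg n) (hk n)) le_rfl
    -- every element way below x is way below g (n+2)
    have hbelow : ∀ x'' : S, WayBelow x'' x → WayBelow x'' (g (n + 2)) := fun x'' hx'' =>
      h Set.univ isBasis_univ x'' x (g (n + 1)) (g (n + 2)) (k (n + 1)) (k (n + 2))
        (Set.mem_univ _) (Set.mem_univ _) (Set.mem_univ _) (Set.mem_univ _)
        (Set.mem_univ _) (Set.mem_univ _) hx'' (hg (n + 1)) (hk (n + 1)) key
    -- hence x ≤ g (n+2)
    obtain ⟨f, hf, hfx⟩ := CuSemigroup.exists_wb_seq x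
    have hfx' : ∀ m, f m ≤ x := fun m => hfx.1 (Set.mem_range_self m)
    have hxle : x ≤ g (n + 2) := by
      apply hfx.2
      rintro _ ⟨m, rfl⟩
      exact wb_le (hbelow (f m) (wb_mono le_rfl (hf m) (hfx' (m + 1))))
    exact wb_mono hxle (hg (n + 2)) (hgy' (n + 3))
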